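/- On the secondary Hochschild complex (C^•(A,B,ε), b), the identity (1 − λ) ∘ b_n = b'_n ∘ (1 − λ) holds, where b'_n is the truncated differential consisting of the first n+1 terms of b_n (omitting the last, cyclic, term). Consequently, the subspaces C^n_λ(A,B,ε) = Ker(1 − λ) form a subcomplex of (C^•(A,B,ε), b). -/

import Mathlib

open scoped TensorProduct
open MulOpposite PiTensorProduct

noncomputable section

/-- Index set for the strictly upper triangular positions of an `m × m` matrix. -/
abbrev UT (m : ℕ) := {p : Fin m × Fin m // p.1 < p.2}

/-- The tensor space `A^{⊗ m} ⊗ B^{⊗ m(m-1)/2}` in its matrix representation. -/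
def TS (k A B : Type) [Field k] [Ring A] [Algebra k A] [CommRing B] [Algebra k B]
    (m : ℕ) : Type :=
  (⨂[k] _ : Fin m, A) ⊗[k] (⨂[k] _ : UT m, B)

variable (k A B : Type) [Field k] [Ring A] [Algebra k A] [CommRing B] [Algebra k B]

instance (m : ℕ) : AddCommGroup (TS k A B m) :=
  inferInstanceAs (AddCommGroup ((⨂[k] _ : Fin m, A) ⊗[k] (⨂[k] _ : UT m, B)))

instance (m : ℕ) : Module k (TS k A B m) :=
  inferInstanceAs (Module k ((⨂[k] _ : Fin m, A) ⊗[k] (⨂[k] _ : UT m, B)))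

/-- The secondary Hochschild cochain space `C^n(A,B,ε) = Hom_k(A^{⊗(n+1)} ⊗ B^{⊗ n(n+1)/2}, k)`. -/
abbrev Cc (n : ℕ) : Type := TS k A B (n + 1) →ₗ[k] k

/-- The pure tensor (generator) determined by diagonal entries `a` and
upper-triangular entries `β` (read at indices `< m`). -/
def gen (m : ℕ) (a : ℕ → A) (β : ℕ → ℕ → B) : TS k A B m :=
  (tprod k fun i : Fin m => a i) ⊗ₜ[k] (tprod k fun p : UT m => β p.1.1 p.1.2)

/-- Diagonal of the matrix obtained by merging diagonal entries `i`, `i+1` via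
`a_i a_{i+1} ε(b_{i,i+1})`. -/
def mergeA (ε : B →ₐ[k] A) (i : ℕ) (a : ℕ → A) (β : ℕ → ℕ → B) : ℕ → A :=
  fun j => if j < i then a j else if j = i then a i * a (i + 1) * ε (β i (i + 1)) else a (j + 1)

/-- Preimages of the index `p` under the monotone surjection collapsing `i` and `i+1`. -/
def preim (i p : ℕ) : Finset ℕ :=
  if p < i then {p} else if p = i then {i, i + 1} else {p + 1}

/-- `B`-entries of the matrix obtained by merging rows/columns `i` and `i+1`. -/
def mergeB (i : ℕ) (β : ℕ → ℕ → B) : ℕ → ℕ → B :=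
  fun p q => ∏ u ∈ preim i p, ∏ v ∈ preim i q, β u v

/-- Diagonal of the "cyclic merge": `a_m a_0 ε(b_{0,m})` in position `0`
(top index `m`). -/
def cmergeA (ε : B →ₐ[k] A) (m : ℕ) (a : ℕ → A) (β : ℕ → ℕ → B) : ℕ → A :=
  fun j => if j = 0 then a m * a 0 * ε (β 0 m) else a j

/-- `B`-entries of the cyclic merge: first row becomes `b_{q,m} b_{0,q}`. -/
def cmergeB (m : ℕ) (β : ℕ → ℕ → B) : ℕ → ℕ → B :=
  fun p q => if p = 0 then β q m * β 0 q else β p q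

/-- Diagonal of the cyclically rotated matrix: `a_n` moves to position `0`. -/
def rotA (n : ℕ) (a : ℕ → A) : ℕ → A :=
  fun j => if j = 0 then a n else a (j - 1)

/-- `B`-entries of the cyclically rotated matrix: the first row becomes
`b_{0,n}, …, b_{n-1,n}`. -/
def rotB (n : ℕ) (β : ℕ → ℕ → B) : ℕ → ℕ → B :=
  fun p q => if p = 0 then β (q - 1) n else β (p - 1) (q - 1)

/-!
Write `d_i` for the merge of entries `i, i+1`, `d_c` for the cyclic merge and `τ` for the
rotation of a matrix. They satisfy the cyclic relations `d_0 τ = d_c`, `d_{i+1} τ = τ d_i`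
for `i < n`, and `d_c τ = τ d_n`. Substituting these into `(λ b φ)(M)` rewrites it as
`(-1)^(n+1)` times `φ(d_c M) - Σ (-1)^i φ(τ d_i M)`. So in `b φ - λ b φ` the cyclic terms
cancel, and what is left is `b' (φ - λ φ)`. Linear forms agree once they agree on pure
tensors, which gives the identity; then `λ φ = φ` implies `λ b φ = b φ`.
-/

lemma exists_gen_eq_tprod_tmul_tprod {m : ℕ} (f : Fin m → A) (g : UT m → B) :
    ∃ a β, gen k A B m a β = tprod k f ⊗ₜ[k] tprod k g := by
  refine ⟨fun j => if hj : j < m then f ⟨j, hj⟩ else 0,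
    fun u v => if h : u < v ∧ v < m then g ⟨(⟨u, h.1.trans h.2⟩, ⟨v, h.2⟩), h.1⟩ else 0, ?_⟩
  have hg : ∀ p : UT m, p.1.1 < p.1.2 := Subtype.prop
  simp only [gen, Fin.is_lt, ↓reduceDIte, Fin.eta, Fin.val_fin_lt, hg, and_self, Prod.mk.eta,
    Subtype.coe_eta]
  rfl

lemma TS.hom_ext {m : ℕ} {ψ χ : TS k A B m →ₗ[k] k}
    (h : ∀ a β, ψ (gen k A B m a β) = χ (gen k A B m a β)) : ψ = χ := by
  refine TensorProduct.ext (PiTensorProduct.ext (MultilinearMap.ext fun f =>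
    PiTensorProduct.ext (MultilinearMap.ext fun g => ?_)))
  obtain ⟨a, β, hgen⟩ := exists_gen_eq_tprod_tmul_tprod k A B f g
  show ψ (tprod k f ⊗ₜ[k] tprod k g) = χ (tprod k f ⊗ₜ[k] tprod k g)
  rw [← hgen]
  exact h a β

lemma gen_congr {m : ℕ} {a a' : ℕ → A} {β β' : ℕ → ℕ → B}
    (ha : ∀ j < m, a j = a' j) (hβ : ∀ p q, p < q → q < m → β p q = β' p q) :
    gen k A B m a β = gen k A B m a' β' := by
  unfold gen
  congr 1
  · exact congrArg _ (funext fun i => ha i i.2)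
  · exact congrArg _ (funext fun p => hβ p.1.1 p.1.2 p.2 p.1.2.2)

lemma preim_of_lt {i p : ℕ} (h : p < i) : preim i p = {p} := if_pos h

lemma preim_self (i : ℕ) : preim i i = {i, i + 1} := by simp [preim]

lemma preim_of_gt {i p : ℕ} (h : i < p) : preim i p = {p + 1} := by
  simp [preim, h.not_gt, h.ne']

lemma preim_succ_succ (i p : ℕ) : preim (i + 1) (p + 1) = (preim i p).image (· + 1) := by
  rcases lt_trichotomy p i with h | rfl | h
  · simp [preim_of_lt h, preim_of_lt (Nat.succ_lt_succ h)]
  · simp [preim_self]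
  · simp [preim_of_gt h, preim_of_gt (Nat.succ_lt_succ h)]

open Finset in
lemma alternating_sum_sub_smul_sub {M : Type*} [AddCommGroup M] (n : ℕ) (F G : ℕ → M) (C : M) :
    (∑ i ∈ range (n + 1), (-1 : ℤ) ^ i • F i + (-1 : ℤ) ^ (n + 1) • C)
      - (-1 : ℤ) ^ (n + 1) • (C - ∑ i ∈ range (n + 1), (-1 : ℤ) ^ i • G i) =
    ∑ i ∈ range (n + 1), (-1 : ℤ) ^ i • (F i - (-1 : ℤ) ^ n • G i) := by
  have hG : (-1 : ℤ) ^ (n + 1) • ∑ i ∈ range (n + 1), (-1 : ℤ) ^ i • G i =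
      -∑ i ∈ range (n + 1), (-1 : ℤ) ^ i • (-1 : ℤ) ^ n • G i := by
    rw [smul_sum, ← sum_neg_distrib]
    refine sum_congr rfl fun i _ => ?_
    rw [smul_comm, pow_succ, mul_neg_one, neg_smul, smul_neg]
  rw [smul_sub, hG]
  simp only [smul_sub, sum_sub_distrib]
  abel

section CyclicRelations

variable (ε : B →ₐ[k] A)

lemma gen_cmerge_eq_merge_zero_rot (n : ℕ) (a : ℕ → A) (β : ℕ → ℕ → B) :
    gen k A B (n + 1) (cmergeA k A B ε (n + 1) a β) (cmergeB B (n + 1) β) =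
      gen k A B (n + 1) (mergeA k A B ε 0 (rotA A (n + 1) a) (rotB B (n + 1) β))
        (mergeB B 0 (rotB B (n + 1) β)) := by
  apply gen_congr
  · rintro (_ | j) _ <;> simp [cmergeA, mergeA, rotA, rotB]
  · rintro p (_ | q) hpq -
    · omega
    rcases p with _ | p <;> simp [cmergeB, mergeB, preim_self, preim_of_gt, rotB, mul_comm]

lemma gen_merge_succ_rot {n i : ℕ} (hi : i < n) (a : ℕ → A) (β : ℕ → ℕ → B) :
    gen k A B (n + 1) (mergeA k A B ε (i + 1) (rotA A (n + 1) a) (rotB B (n + 1) β))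
        (mergeB B (i + 1) (rotB B (n + 1) β)) =
      gen k A B (n + 1) (rotA A n (mergeA k A B ε i a β)) (rotB B n (mergeB B i β)) := by
  apply gen_congr
  · rintro (_ | j) -
    · simp [mergeA, rotA, hi.not_gt, hi.ne']
    rcases lt_trichotomy j i with h | rfl | h
    · simp [mergeA, rotA, h]
    · simp [mergeA, rotA, rotB]
    · simp [mergeA, rotA, h.not_gt, h.ne']
  · rintro p (_ | q) hpq -
    · omega
    rcases p with _ | p
    · simp [mergeB, preim_of_lt (Nat.succ_pos i), preim_succ_succ, preim_of_gt hi, rotB]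
    · simp [mergeB, preim_succ_succ, rotB]

lemma gen_cmerge_rot (n : ℕ) (a : ℕ → A) (β : ℕ → ℕ → B) :
    gen k A B (n + 1) (cmergeA k A B ε (n + 1) (rotA A (n + 1) a) (rotB B (n + 1) β))
        (cmergeB B (n + 1) (rotB B (n + 1) β)) =
      gen k A B (n + 1) (rotA A n (mergeA k A B ε n a β)) (rotB B n (mergeB B n β)) := by
  apply gen_congr
  · rintro (_ | j) hj
    · simp [cmergeA, mergeA, rotA, rotB]
    · simp [cmergeA, mergeA, rotA, show j < n by omega]
  · rintro p (_ | q) hpq hq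
    · omega
    have hqn : q < n := by omega
    rcases p with _ | p
    · simp [cmergeB, mergeB, preim_self, preim_of_lt hqn, rotB]
    · simp [cmergeB, mergeB, preim_of_lt hqn, preim_of_lt (show p < n by omega), rotB]

open Finset in
lemma alternating_merge_sum_rot {M : Type*} [AddCommGroup M] {n : ℕ}
    (φ : TS k A B (n + 1) → M) (a : ℕ → A) (β : ℕ → ℕ → B) :
    ∑ i ∈ range (n + 1), (-1 : ℤ) ^ i • φ (gen k A B (n + 1)
        (mergeA k A B ε i (rotA A (n + 1) a) (rotB B (n + 1) β)) (mergeB B i (rotB B (n + 1) β)))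
      + (-1 : ℤ) ^ (n + 1) • φ (gen k A B (n + 1)
        (cmergeA k A B ε (n + 1) (rotA A (n + 1) a) (rotB B (n + 1) β))
        (cmergeB B (n + 1) (rotB B (n + 1) β))) =
    φ (gen k A B (n + 1) (cmergeA k A B ε (n + 1) a β) (cmergeB B (n + 1) β))
      - ∑ i ∈ range (n + 1), (-1 : ℤ) ^ i •
        φ (gen k A B (n + 1) (rotA A n (mergeA k A B ε i a β)) (rotB B n (mergeB B i β))) := by
  have shifted : ∀ j ∈ range n, (-1 : ℤ) ^ (j + 1) • φ (gen k A B (n + 1)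
        (mergeA k A B ε (j + 1) (rotA A (n + 1) a) (rotB B (n + 1) β))
        (mergeB B (j + 1) (rotB B (n + 1) β))) =
      -((-1 : ℤ) ^ j • φ (gen k A B (n + 1) (rotA A n (mergeA k A B ε j a β))
        (rotB B n (mergeB B j β)))) := fun j hj => by
    rw [gen_merge_succ_rot k A B ε (mem_range.1 hj), pow_succ, mul_neg_one, neg_smul]
  rw [sum_range_succ', sum_congr rfl shifted, sum_neg_distrib, gen_cmerge_rot,
    ← gen_cmerge_eq_merge_zero_rot, sum_range_succ _ n, pow_succ, pow_zero, one_smul]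
  simp only [mul_neg_one, neg_smul]
  abel

end CyclicRelations

theorem secondary_cyclic_subcomplex
    (ε : B →ₐ[k] A)
    (lam : ∀ n : ℕ, Module.End k (Cc k A B n))
    (hlam : ∀ (n : ℕ) (φ : Cc k A B n) (a : ℕ → A) (β : ℕ → ℕ → B),
      lam n φ (gen k A B (n + 1) a β) =
        (-1 : ℤ) ^ n • φ (gen k A B (n + 1) (rotA A n a) (rotB B n β)))
    (b : ∀ n : ℕ, Cc k A B n →ₗ[k] Cc k A B (n + 1))
    (hb : ∀ (n : ℕ) (φ : Cc k A B n) (a : ℕ → A) (β : ℕ → ℕ → B),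
      b n φ (gen k A B (n + 2) a β) =
        (∑ i ∈ Finset.range (n + 1), (-1 : ℤ) ^ i •
            φ (gen k A B (n + 1) (mergeA k A B ε i a β) (mergeB B i β)))
        + (-1 : ℤ) ^ (n + 1) •
            φ (gen k A B (n + 1) (cmergeA k A B ε (n + 1) a β) (cmergeB B (n + 1) β)))
    (btr : ∀ n : ℕ, Cc k A B n →ₗ[k] Cc k A B (n + 1))
    (hbtr : ∀ (n : ℕ) (φ : Cc k A B n) (a : ℕ → A) (β : ℕ → ℕ → B),
      btr n φ (gen k A B (n + 2) a β) =
        ∑ i ∈ Finset.range (n + 1), (-1 : ℤ) ^ i •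
            φ (gen k A B (n + 1) (mergeA k A B ε i a β) (mergeB B i β))) :
    (∀ (n : ℕ) (φ : Cc k A B n),
        b n φ - lam (n + 1) (b n φ) = btr n (φ - lam n φ)) ∧
    (∀ (n : ℕ) (φ : Cc k A B n), lam n φ = φ → lam (n + 1) (b n φ) = b n φ) := by
  have commute : ∀ (n : ℕ) (φ : Cc k A B n),
      b n φ - lam (n + 1) (b n φ) = btr n (φ - lam n φ) := by
    intro n φ
    refine TS.hom_ext k A B fun a β => ?_
    rw [LinearMap.sub_apply, hlam, hb, hb, alternating_merge_sum_rot, hbtr]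
    simp only [LinearMap.sub_apply, hlam]
    exact alternating_sum_sub_smul_sub n _ _ _
  refine ⟨commute, fun n φ hφ => ?_⟩
  have h := commute n φ
  rw [hφ, sub_self, map_zero, sub_eq_zero] at h
  exact h.symm
end
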